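/- Let V = {0,…,n_x−1} × {0,…,n_y−1} with n_x ≥ 2 and n_y ≥ 2, and let C ⊆ V. Suppose that for every interior node q = (i,j) (meaning 1 ≤ i ≤ n_x−2 and 1 ≤ j ≤ n_y−2), the pentomino centred at q — the five-element set consisting of q and its four grid neighbours (the nodes at Manhattan distance exactly 1 from q) — contains at least one element of C. Then the F-fraction f = (n_x·n_y − |C|)/(n_x·n_y) satisfies f ≤ 4/5 + 2/n_x + 2/n_y − 4/(n_x·n_y). -/
import Mathlib


open Finset

/-- The rectangular grid `{0,…,nx−1} × {0,…,ny−1}`. -/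
def grid (nx ny : ℕ) : Finset (ℕ × ℕ) := Finset.range nx ×ˢ Finset.range ny

/-- Manhattan distance between two grid points. -/
def mdist (p q : ℕ × ℕ) : ℤ := |(p.1 : ℤ) - (q.1 : ℤ)| + |(p.2 : ℤ) - (q.2 : ℤ)|

/-- Interior node of the `nx × ny` grid: `1 ≤ i ≤ nx−2` and `1 ≤ j ≤ ny−2`. -/
def isInterior (nx ny : ℕ) (p : ℕ × ℕ) : Prop :=
  1 ≤ p.1 ∧ p.1 ≤ nx - 2 ∧ 1 ≤ p.2 ∧ p.2 ≤ ny - 2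

/-- The pentomino centred at `q`: the node `q` together with its grid neighbours,
i.e. the grid nodes at Manhattan distance at most `1` from `q`. -/
def pentomino (nx ny : ℕ) (q : ℕ × ℕ) : Finset (ℕ × ℕ) :=
  (grid nx ny).filter (fun c => mdist q c ≤ 1)

lemma card5 {α} [DecidableEq α] (a b c d e : α) : ({a,b,c,d,e} : Finset α).card ≤ 5 := by
  apply (Finset.card_insert_le _ _).trans
  apply Nat.succ_le_succ
  apply (Finset.card_insert_le _ _).trans
  apply Nat.succ_le_succ
  apply (Finset.card_insert_le _ _).trans
  apply Nat.succ_le_succ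
  apply (Finset.card_insert_le _ _).trans
  apply Nat.succ_le_succ
  simp

theorem ffraction_bound_of_pentomino
    (nx ny : ℕ) (hx : 2 ≤ nx) (hy : 2 ≤ ny)
    (C : Finset (ℕ × ℕ)) (hC : C ⊆ grid nx ny)
    (hpent : ∀ q ∈ grid nx ny, isInterior nx ny q → ∃ c ∈ pentomino nx ny q, c ∈ C) :
    ((nx * ny : ℝ) - C.card) / (nx * ny) ≤
      4 / 5 + 2 / nx + 2 / ny - 4 / (nx * ny) := by
  classical
  set I : Finset (ℕ × ℕ) := Finset.Icc 1 (nx-2) ×ˢ Finset.Icc 1 (ny-2) with hIdef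
  have hImem : ∀ q ∈ I, q ∈ grid nx ny ∧ isInterior nx ny q := by
    intro q hq
    simp only [hIdef, Finset.mem_product, Finset.mem_Icc] at hq
    constructor
    · simp only [grid, Finset.mem_product, Finset.mem_range]
      omega
    · exact ⟨hq.1.1, hq.1.2, hq.2.1, hq.2.2⟩
  have hex : ∀ q : ℕ × ℕ, ∃ c, q ∈ I → c ∈ C ∧ mdist q c ≤ 1 := by
    intro q
    by_cases hq : q ∈ I
    · obtain ⟨hg, hint⟩ := hImem q hq
      obtain ⟨c, hc1, hc2⟩ := hpent q hg hint
      simp only [pentomino, Finset.mem_filter] at hc1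
      exact ⟨c, fun _ => ⟨hc2, hc1.2⟩⟩
    · exact ⟨q, fun h => absurd h hq⟩
  choose f hf using hex
  -- fibers of f on I have size ≤ 5
  have hcard : I.card ≤ 5 * (I.image f).card := by
    apply Finset.card_le_mul_card_image
    intro c _
    have hsub : (I.filter fun q => f q = c) ⊆
        ({(c.1 - 1, c.2), (c.1 + 1, c.2), (c.1, c.2 - 1), (c.1, c.2 + 1), c} : Finset (ℕ × ℕ)) := by
      intro q hq
      simp only [Finset.mem_filter] at hq
      obtain ⟨hqI, hfq⟩ := hq
      have hd : mdist q c ≤ 1 := hfq ▸ (hf q hqI).2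
      simp only [mdist] at hd
      have h1 := abs_nonneg ((q.1 : ℤ) - c.1)
      have h2 := abs_nonneg ((q.2 : ℤ) - c.2)
      rcases abs_cases ((q.1 : ℤ) - c.1) with ⟨e1, _⟩ | ⟨e1, _⟩ <;>
        rcases abs_cases ((q.2 : ℤ) - c.2) with ⟨e2, _⟩ | ⟨e2, _⟩ <;>
        rw [e1, e2] at hd <;>
        · simp only [Finset.mem_insert, Finset.mem_singleton, Prod.ext_iff]
          omega
    calc (I.filter fun q => f q = c).card ≤ _ := Finset.card_le_card hsub
      _ ≤ 5 := card5 _ _ _ _ _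
  have hsubC : I.image f ⊆ C := by
    rw [Finset.image_subset_iff]
    exact fun q hq => (hf q hq).1
  have hIcard : I.card = (nx - 2) * (ny - 2) := by
    simp [hIdef, Finset.card_product, Nat.card_Icc]
  have key : (nx - 2) * (ny - 2) ≤ 5 * C.card := by
    rw [← hIcard]
    exact hcard.trans (Nat.mul_le_mul_left 5 (Finset.card_le_card hsubC))
  -- real arithmetic
  have keyR : ((nx : ℝ) - 2) * ((ny : ℝ) - 2) ≤ 5 * C.card := by
    have := (Nat.cast_le (α := ℝ)).2 key
    push_cast [Nat.cast_sub hx, Nat.cast_sub hy] at this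
    convert this using 2 <;> push_cast [Nat.cast_sub hx, Nat.cast_sub hy] <;> ring
  have hxR : (2 : ℝ) ≤ nx := by exact_mod_cast hx
  have hyR : (2 : ℝ) ≤ ny := by exact_mod_cast hy
  have hxpos : (0 : ℝ) < nx := by linarith
  have hypos : (0 : ℝ) < ny := by linarith
  rw [div_le_iff₀ (by positivity)]
  have hexp : (4 / 5 + 2 / (nx : ℝ) + 2 / ny - 4 / (nx * ny)) * (nx * ny)
      = 4 / 5 * (nx * ny) + 2 * ny + 2 * nx - 4 := by
    field_simp
  rw [hexp]
  nlinarith [keyR]
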